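/- arXiv:quant-ph/0106084 — 5 statements merged into one kernel-verified Lean document; each statement's English description precedes it below -/
import Mathlib

section
/- If A is a bounded operator on a separable Hilbert space with orthonormal basis {|n⟩ : n ∈ ℕ} such that ⟨z|A|z⟩ = 0 for every coherent state |z⟩ = e^{-|z|²/2} ∑_n (zⁿ/√n!)|n⟩, z ∈ ℂ, then A = 0. -/
/-!
Writing `d n m = ⟨n|A|m⟩ / √(n! m!)`, the function `e^{|z|²} ⟨z|A|z⟩ = ∑ z̄ⁿ zᵐ d n m` vanishes
identically. Along the ray `z = r l` with `|l| = 1` it is a power series in `r` whose `k`-th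
coefficient is `∑_{n+m=k} l̄ⁿ lᵐ d n m`, so each of these coefficients vanishes. Multiplied by
`lᵏ` this is the polynomial `∑_{n+m=k} d n m l^{2m}` in `l`, which vanishes on the whole unit
circle and therefore has zero coefficients.
-/

open scoped Real

/-- The coherent state `|z⟩ = e^{-|z|²/2} ∑ₙ (zⁿ/√n!) |n⟩` with respect to the
orthonormal (number) basis `e`. -/
noncomputable def coherentState {H : Type*} [NormedAddCommGroup H] [InnerProductSpace ℂ H]
    [CompleteSpace H] (e : HilbertBasis ℕ ℂ H) (z : ℂ) : H :=
  (Real.exp (-(‖z‖) ^ 2 / 2) : ℂ) •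
    ∑' n : ℕ, (z ^ n / (Real.sqrt (Nat.factorial n) : ℂ)) • e n

open scoped NNReal ComplexConjugate InnerProductSpace
open Finset Polynomial

theorem summable_pow_div_sqrt_factorial (x : ℝ) :
    Summable fun n : ℕ => |x| ^ n / √(n.factorial) := by
  have hgeom : Summable fun n : ℕ => (2⁻¹ : ℝ) ^ n :=
    summable_geometric_of_lt_one (by norm_num) (by norm_num)
  refine (((Real.summable_pow_div_factorial (2 * x ^ 2)).add hgeom).div_const 2).of_nonneg_of_le
    (fun n => by positivity) fun n => ?_
  have hfactor :
      |x| ^ n / √(n.factorial) = √((2 * x ^ 2) ^ n / n.factorial) * √((2⁻¹ : ℝ) ^ n) := by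
    rw [← Real.sqrt_mul (by positivity), div_mul_eq_mul_div, ← mul_pow,
      Real.sqrt_div' _ (by positivity)]
    congr 1
    rw [show 2 * x ^ 2 * 2⁻¹ = |x| ^ 2 by rw [sq_abs]; ring, ← pow_mul, mul_comm, pow_mul,
      Real.sqrt_sq (by positivity)]
  have hamgm := two_mul_le_add_sq (√((2 * x ^ 2) ^ n / n.factorial)) (√((2⁻¹ : ℝ) ^ n))
  rw [Real.sq_sqrt (by positivity), Real.sq_sqrt (by positivity)] at hamgm
  linarith

theorem HasSum.sum_antidiagonal {α A : Type*} [AddCommMonoid α] [TopologicalSpace α]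
    [ContinuousAdd α] [T3Space α] [AddCommMonoid A] [HasAntidiagonal A] {f : A × A → α} {a : α}
    (hf : HasSum f a) : HasSum (fun n => ∑ p ∈ antidiagonal n, f p) a :=
  (HasAntidiagonal.sigmaAntidiagonalEquivProd.hasSum_iff.mpr hf).sigma fun n =>
    (antidiagonal n).hasSum f

theorem eq_zero_of_forall_hasSum_pow_smul_eq_zero {𝕜 E : Type*} [NontriviallyNormedField 𝕜]
    [NormedAddCommGroup E] [NormedSpace 𝕜 E] [CompleteSpace E] {c : ℕ → E}
    (hc : ∀ r : ℝ≥0, Summable fun n => ‖c n‖ * r ^ n)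
    (h : ∀ x : 𝕜, HasSum (fun n => x ^ n • c n) 0) : c = 0 := by
  set p : FormalMultilinearSeries 𝕜 𝕜 E :=
    fun n => ContinuousMultilinearMap.mkPiRing 𝕜 (Fin n) (c n)
  have hp : p.radius = ⊤ := p.radius_eq_top_of_summable_norm fun r => by
    simpa [p, ContinuousMultilinearMap.norm_mkPiRing] using hc r
  have hsum : p.sum = 0 := funext fun x => by
    simpa [FormalMultilinearSeries.sum, p] using (h x).tsum_eq
  have hzero : HasFPowerSeriesAt 0 p 0 :=
    hsum ▸ (p.hasFPowerSeriesOnBall (hp ▸ ENNReal.zero_lt_top)).hasFPowerSeriesAt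
  funext n
  simpa [p, FormalMultilinearSeries.coeff] using congrArg (fun q => q.coeff n) hzero.eq_zero

theorem eq_zero_of_forall_sum_antidiagonal_conj_pow_mul_pow_eq_zero (k : ℕ) {d : ℕ × ℕ → ℂ}
    (h : ∀ l : ℂ, ‖l‖ = 1 → ∑ p ∈ antidiagonal k, conj l ^ p.1 * l ^ p.2 * d p = 0) :
    ∀ p ∈ antidiagonal k, d p = 0 := by
  set P : ℂ[X] := ∑ p ∈ antidiagonal k, monomial (2 * p.2) (d p)
  have hroot : ∀ l : ℂ, ‖l‖ = 1 → P.IsRoot l := fun l hl => by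
    have hconj : conj l * l = 1 := by rw [Complex.conj_mul', hl]; simp
    calc P.eval l = l ^ k * ∑ p ∈ antidiagonal k, conj l ^ p.1 * l ^ p.2 * d p := by
          simp only [P, eval_finsetSum, eval_monomial, mul_sum]
          refine sum_congr rfl fun p hp => ?_
          rw [← HasAntidiagonal.mem_antidiagonal.mp hp]
          calc d p * l ^ (2 * p.2) = (conj l * l) ^ p.1 * (d p * l ^ (2 * p.2)) := by
                rw [hconj, one_pow, one_mul]
            _ = _ := by ring
      _ = 0 := by rw [h l hl, mul_zero]
  have hcircle : (Metric.sphere (0 : ℂ) 1).Infinite :=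
    (isConnected_sphere (by simp) 0 zero_le_one).isPreconnected.infinite_of_nontrivial
      ⟨1, by simp, -1, by simp, by norm_num⟩
  have hP : P = 0 :=
    eq_zero_of_infinite_isRoot P <| hcircle.mono fun l hl => hroot l (by simpa using hl)
  intro p hp
  have hcoeff := congrArg (coeff · (2 * p.2)) hP
  simp only [P, finsetSum_coeff, coeff_monomial, coeff_zero] at hcoeff
  rwa [sum_eq_single_of_mem p hp fun q hq hqp => if_neg fun hpq => hqp ?_, if_pos rfl] at hcoeff
  rw [HasAntidiagonal.mem_antidiagonal] at hp hq
  ext <;> omega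

theorem eq_zero_of_forall_hasSum_conj_pow_mul_pow_eq_zero {d : ℕ × ℕ → ℂ}
    (h : ∀ z : ℂ, HasSum (fun p => conj z ^ p.1 * z ^ p.2 * d p) 0) : d = 0 := by
  funext p
  refine eq_zero_of_forall_sum_antidiagonal_conj_pow_mul_pow_eq_zero (p.1 + p.2) (fun l hl => ?_) p
    (HasAntidiagonal.mem_antidiagonal.mpr rfl)
  set c : ℕ → ℂ := fun k => ∑ q ∈ antidiagonal k, conj l ^ q.1 * l ^ q.2 * d q
  have hscale (r : ℝ) (k : ℕ) :
      r ^ k • c k = ∑ q ∈ antidiagonal k, conj (r * l) ^ q.1 * (r * l) ^ q.2 * d q := by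
    rw [smul_sum]
    refine sum_congr rfl fun q hq => ?_
    rw [← HasAntidiagonal.mem_antidiagonal.mp hq, Complex.real_smul, map_mul, Complex.conj_ofReal]
    push_cast
    ring
  have hsum (r : ℝ) : HasSum (fun k => r ^ k • c k) 0 := by
    simpa only [hscale] using (h (r * l)).sum_antidiagonal
  have hc : c = 0 := eq_zero_of_forall_hasSum_pow_smul_eq_zero
    (fun r => by simpa [norm_smul, mul_comm] using (hsum r).summable.norm) hsum
  exact congrFun hc (p.1 + p.2)

theorem hasSum_inner_apply_tsum_smul {𝕜 E ι : Type*} [RCLike 𝕜] [NormedAddCommGroup E]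
    [InnerProductSpace 𝕜 E] [CompleteSpace E] (A : E →L[𝕜] E) {v : ι → E} (hv : ∀ i, ‖v i‖ ≤ 1)
    {a b : ι → 𝕜} (ha : Summable fun i => ‖a i‖) (hb : Summable fun i => ‖b i‖) :
    HasSum (fun p : ι × ι => conj (a p.1) * b p.2 * ⟪v p.1, A (v p.2)⟫_𝕜)
      ⟪∑' i, a i • v i, A (∑' i, b i • v i)⟫_𝕜 := by
  have hsummable (c : ι → 𝕜) (hc : Summable fun i => ‖c i‖) : Summable fun i => c i • v i :=
    .of_norm_bounded hc fun i => by
      simpa [norm_smul] using mul_le_of_le_one_right (norm_nonneg (c i)) (hv i)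
  set x := ∑' i, a i • v i
  set y := ∑' i, b i • v i
  have hrow (i : ι) : HasSum (fun j => conj (a i) * b j * ⟪v i, A (v j)⟫_𝕜)
      (conj (a i) * ⟪v i, A y⟫_𝕜) := by
    simpa [inner_smul_right, mul_assoc] using
      (((hsummable b hb).hasSum.mapL A).mapL (innerSL 𝕜 (v i))).mul_left (conj (a i))
  have hcol : HasSum (fun i => conj (a i) * ⟪v i, A y⟫_𝕜) ⟪x, A y⟫_𝕜 := by
    simpa [inner_smul_left] using (hsummable a ha).hasSum.mapL (innerSLFlip 𝕜 (A y))
  have hmatrix (i j : ι) : ‖⟪v i, A (v j)⟫_𝕜‖ ≤ ‖A‖ :=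
    calc ‖⟪v i, A (v j)⟫_𝕜‖ ≤ ‖v i‖ * ‖A (v j)‖ := norm_inner_le_norm _ _
      _ ≤ 1 * (‖A‖ * 1) := by gcongr; exacts [hv i, A.le_opNorm_of_le (hv j)]
      _ = ‖A‖ := by ring
  have hprod : Summable fun p : ι × ι => conj (a p.1) * b p.2 * ⟪v p.1, A (v p.2)⟫_𝕜 :=
    .of_norm_bounded
      ((ha.mul_of_nonneg hb (fun _ => norm_nonneg _) fun _ => norm_nonneg _).mul_right ‖A‖)
      fun p => by
        simpa [norm_mul] using mul_le_mul_of_nonneg_left (hmatrix p.1 p.2) (by positivity)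
  rw [← (hprod.hasSum.prod_fiberwise hrow).unique hcol]
  exact hprod.hasSum

theorem HilbertBasis.eq_zero_of_inner_apply_eq_zero {𝕜 E ι : Type*} [RCLike 𝕜]
    [NormedAddCommGroup E] [InnerProductSpace 𝕜 E] (b : HilbertBasis ι 𝕜 E) {A : E →L[𝕜] E}
    (h : ∀ i j, ⟪b i, A (b j)⟫_𝕜 = 0) : A = 0 := by
  refine ContinuousLinearMap.ext_on
    (Submodule.dense_iff_topologicalClosure_eq_top.mpr b.dense_span) ?_
  rintro _ ⟨j, rfl⟩
  have hrepr := b.hasSum_repr (A (b j))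
  simp only [b.repr_apply_apply, h, zero_smul] at hrepr
  exact hrepr.unique hasSum_zero

theorem hasSum_inner_coherentState_apply {H : Type*} [NormedAddCommGroup H]
    [InnerProductSpace ℂ H] [CompleteSpace H] (e : HilbertBasis ℕ ℂ H) (A : H →L[ℂ] H) (z : ℂ) :
    HasSum (fun p : ℕ × ℕ => conj z ^ p.1 * z ^ p.2 *
        (⟪e p.1, A (e p.2)⟫_ℂ / (√(p.1.factorial) * √(p.2.factorial))))
      (Real.exp (‖z‖ ^ 2) * ⟪coherentState e z, A (coherentState e z)⟫_ℂ) := by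
  have hcoeff : Summable fun n : ℕ => ‖z ^ n / (√(n.factorial) : ℂ)‖ := by
    simpa [Complex.norm_real, abs_of_nonneg (Real.sqrt_nonneg _)] using
      summable_pow_div_sqrt_factorial ‖z‖
  have hterm (p : ℕ × ℕ) : conj z ^ p.1 * z ^ p.2 *
      (⟪e p.1, A (e p.2)⟫_ℂ / (√(p.1.factorial) * √(p.2.factorial))) =
      conj (z ^ p.1 / (√(p.1.factorial) : ℂ)) * (z ^ p.2 / (√(p.2.factorial) : ℂ)) *
        ⟪e p.1, A (e p.2)⟫_ℂ := by
    simp only [map_div₀, map_pow, Complex.conj_ofReal]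
    ring
  have hvalue : Real.exp (‖z‖ ^ 2) * ⟪coherentState e z, A (coherentState e z)⟫_ℂ =
      ⟪∑' n : ℕ, (z ^ n / (√(n.factorial) : ℂ)) • e n,
        A (∑' n : ℕ, (z ^ n / (√(n.factorial) : ℂ)) • e n)⟫_ℂ := by
    simp only [coherentState, map_smul, inner_smul_left, inner_smul_right, Complex.conj_ofReal,
      ← mul_assoc]
    have hnorm : Real.exp (‖z‖ ^ 2) * Real.exp (-‖z‖ ^ 2 / 2) * Real.exp (-‖z‖ ^ 2 / 2) = 1 := by
      rw [← Real.exp_add, ← Real.exp_add, ← Real.exp_zero]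
      ring_nf
    rw [← Complex.ofReal_mul, ← Complex.ofReal_mul, hnorm, Complex.ofReal_one, one_mul]
  rw [hvalue]
  exact (hasSum_inner_apply_tsum_smul A (fun n => (e.orthonormal.1 n).le) hcoeff hcoeff).congr_fun
    hterm

/-- If a bounded operator `A` satisfies `⟨z|A|z⟩ = 0` for every coherent state `|z⟩`,
then `A = 0`. -/
theorem stmt0 {H : Type*} [NormedAddCommGroup H] [InnerProductSpace ℂ H] [CompleteSpace H]
    (e : HilbertBasis ℕ ℂ H) (A : H →L[ℂ] H)
    (h : ∀ z : ℂ, (inner ℂ (coherentState e z) (A (coherentState e z)) : ℂ) = 0) :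
    A = 0 := by
  have hd := eq_zero_of_forall_hasSum_conj_pow_mul_pow_eq_zero fun z => by
    simpa [h z] using hasSum_inner_coherentState_apply e A z
  refine e.eq_zero_of_inner_apply_eq_zero fun n m => ?_
  simpa [Nat.factorial_ne_zero] using congrFun hd (n, m)
end

section
/- A POM E on the Borel sets of [0,2π) is phase shift covariant (R(θ)E(X)R(θ)* = E(X⊕θ) for all Borel X and θ ∈ ℝ) if and only if all coherent state probability measures satisfy the covariance condition p_{|z e^{-iθ}⟩}(X) = p_{|z⟩}(X⊕θ) for all z ∈ ℂ, θ ∈ [0,2π), X Borel. -/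
open scoped Real
open MeasureTheory ContinuousLinearMap

/-- The cyclically shifted set `X ⊕ θ = {x ∈ [0,2π) | (x − θ) mod 2π ∈ X}`. -/
def shiftSet (X : Set ℝ) (θ : ℝ) : Set ℝ :=
  {x | x ∈ Set.Ico 0 (2 * π) ∧ 2 * π * Int.fract ((x - θ) / (2 * π)) ∈ X}

/-!
Since `R(θ)† |z⟩ = |z e^{-iθ}⟩`, the coherent-state condition says exactly that the bounded
operator `D = R(θ) E(X) R(θ)† - E(X ⊕ θ)` has `⟨z|D|z⟩ = 0` for every `z`; both sides are
`2π`-periodic in `θ`, so restricting `θ` to `[0, 2π)` loses nothing. Such a function determines the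
operator: for `z = r e^{it}`, `e^{r²} ⟨z|D|z⟩ = ∑ D_{mn} r^{m+n} e^{i(n-m)t} / √(m! n!)`, and the
exponent pair `(m + n, n - m)` determines `(m, n)`. Integrating against `e^{-ikt}` isolates one
value of `n - m`, and uniqueness of power series in `r` then forces every `D_{mn}` to vanish.
-/

open Complex Function Filter Topology

theorem integral_exp_int_mul_mul_I (n : ℤ) :
    ∫ t in (0 : ℝ)..2 * π, exp (n * t * I) = if n = 0 then (2 * π : ℂ) else 0 := by
  split_ifs with hn
  · simp [hn]
  · have hc : (n * I : ℂ) ≠ 0 := mul_ne_zero (Int.cast_ne_zero.2 hn) I_ne_zero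
    have hexp : exp (n * I * (2 * π : ℝ)) = 1 := by
      rw [← exp_int_mul_two_pi_mul_I n]; push_cast; ring_nf
    simp_rw [mul_right_comm _ _ I, integral_exp_mul_complex hc, hexp]
    simp

theorem norm_mul_exp_int_mul_mul_I (w : ℂ) (n : ℤ) (t : ℝ) : ‖w * exp (n * t * I)‖ = ‖w‖ := by
  have := norm_exp_ofReal_mul_I (n * t)
  push_cast at this
  rw [norm_mul, this, mul_one]

theorem tsum_subtype_eq_zero_of_tsum_mul_exp_eq_zero {ι : Type*} [Countable ι] {w : ι → ℂ}
    (hw : Summable (‖w ·‖)) (L : ι → ℤ) (h : ∀ t : ℝ, ∑' i, w i * exp (L i * t * I) = 0)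
    (k : ℤ) : ∑' i : {i // L i = k}, w i = 0 := by
  have hsum : HasSum (fun i => ∫ t in (0 : ℝ)..2 * π, w i * exp ((L i - k : ℤ) * t * I))
      (∫ t in (0 : ℝ)..2 * π, 0) := by
    refine intervalIntegral.hasSum_integral_of_dominated_convergence (fun i _ => ‖w i‖)
      (fun i => by fun_prop) (fun i => ae_of_all _ fun t _ => ?_) (ae_of_all _ fun _ _ => hw)
      intervalIntegrable_const (ae_of_all _ fun t _ => ?_)
    · rw [norm_mul_exp_int_mul_mul_I]
    · have hfactor : ∀ i, w i * exp ((L i - k : ℤ) * t * I) =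
          exp (-(k * t * I)) * (w i * exp (L i * t * I)) := fun i => by
        rw [mul_left_comm, ← exp_add]; push_cast; ring_nf
      have hsummable : Summable fun i => w i * exp (L i * t * I) :=
        hw.of_norm_bounded fun i => (norm_mul_exp_int_mul_mul_I _ _ _).le
      have := (hsummable.mul_left (exp (-(k * t * I)))).hasSum
      rwa [tsum_mul_left, h t, mul_zero, ← funext hfactor] at this
  have h2π : (2 * π : ℂ) ≠ 0 := by exact_mod_cast Real.two_pi_pos.ne'
  simp only [intervalIntegral.integral_const_mul, integral_exp_int_mul_mul_I, sub_eq_zero,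
    intervalIntegral.integral_zero] at hsum
  refine (tsum_subtype {i | L i = k} w).trans ?_
  rw [← mul_eq_zero_iff_left h2π, ← hsum.tsum_eq, ← tsum_mul_left]
  congr 1 with i
  by_cases hi : L i = k <;> simp [hi, mul_comm]

theorem eq_zero_of_tsum_mul_pow_eq_zero {b : ℕ → ℂ} (hb : Summable (‖b ·‖))
    (h : ∀ r ∈ Set.Ioo (0 : ℝ) 1, ∑' n, b n * r ^ n = 0) : b = 0 := by
  set p := FormalMultilinearSeries.ofScalars ℂ b
  have hradius : ((1 : NNReal) : ENNReal) ≤ p.radius :=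
    p.le_radius_of_summable_norm (by simpa [p, FormalMultilinearSeries.ofScalars_norm] using hb)
  have hp : HasFPowerSeriesAt p.sum p 0 :=
    (p.hasFPowerSeriesOnBall (zero_lt_one.trans_le hradius)).hasFPowerSeriesAt
  have hsum : ∀ x : ℂ, p.sum x = ∑' n, b n * x ^ n := fun x => by
    simp [p, FormalMultilinearSeries.sum, mul_comm]
  have hreal : ∀ᶠ r : ℝ in 𝓝[>] 0, p.sum r = 0 := by
    filter_upwards [Ioo_mem_nhdsGT zero_lt_one] with r hr
    rw [hsum, h r hr]
  have hcast : Tendsto (fun r : ℝ => (r : ℂ)) (𝓝[>] 0) (𝓝[≠] 0) :=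
    tendsto_nhdsWithin_of_tendsto_nhds_of_eventually_within _
      (continuous_ofReal.tendsto' 0 0 ofReal_zero |>.mono_left nhdsWithin_le_nhds)
      (eventually_nhdsWithin_of_forall fun r hr => ofReal_ne_zero.2 (ne_of_gt hr))
  have hzero : ∀ᶠ x in 𝓝 0, p.sum x = 0 :=
    hp.analyticAt.frequently_zero_iff_eventually_zero.1 (hcast.frequently hreal.frequently)
  exact (FormalMultilinearSeries.ofScalars_series_eq_zero ℂ).1 (hp.locally_zero_iff.1 hzero)

theorem Function.Injective.eq_zero_of_tsum_mul_pow_eq_zero {ι : Type*} {β : ι → ℂ}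
    (hβ : Summable (‖β ·‖)) {d : ι → ℕ} (hd : Injective d)
    (h : ∀ r ∈ Set.Ioo (0 : ℝ) 1, ∑' i, β i * r ^ d i = 0) : β = 0 := by
  have hextend {γ : Type} [Zero γ] (f : ℕ → ℂ → γ) (hf : ∀ n, f n 0 = 0) (n : ℕ) :
      f n (extend d β 0 n) = extend d (fun i => f (d i) (β i)) 0 n := by
    by_cases hn : ∃ i, d i = n
    · obtain ⟨i, rfl⟩ := hn
      simp only [hd.extend_apply]
    · simp only [extend_apply' _ _ _ hn, Pi.zero_apply, hf]
  have hb : extend d β 0 = 0 := by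
    refine _root_.eq_zero_of_tsum_mul_pow_eq_zero ?_ fun r hr => ?_
    · rw [funext (hextend (fun _ z => ‖z‖) fun _ => norm_zero)]
      exact (summable_extend_zero hd).2 hβ
    · rw [funext (hextend (fun n z => z * r ^ n) fun _ => zero_mul _), tsum_extend_zero hd]
      exact h r hr
  funext i
  simpa [hd.extend_apply] using congrFun hb (d i)

theorem eq_zero_of_tsum_mul_pow_mul_exp_eq_zero {ι : Type*} [Countable ι] {β : ι → ℂ}
    (hβ : Summable (‖β ·‖)) {d : ι → ℕ} {L : ι → ℤ} (hdL : Injective fun i => (d i, L i))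
    (h : ∀ r ∈ Set.Ioo (0 : ℝ) 1, ∀ t : ℝ, ∑' i, β i * r ^ d i * exp (L i * t * I) = 0) :
    β = 0 := by
  funext i₀
  have hd : Injective fun i : {i // L i = L i₀} => d i := fun i j hij =>
    Subtype.ext (hdL (Prod.ext hij (i.2.trans j.2.symm)))
  refine congrFun (hd.eq_zero_of_tsum_mul_pow_eq_zero (hβ.subtype _) fun r hr => ?_) ⟨i₀, rfl⟩
  have hbound : ∀ i, ‖β i * (r : ℂ) ^ d i‖ ≤ ‖β i‖ := fun i => by
    rw [norm_mul, norm_pow, norm_real, Real.norm_of_nonneg hr.1.le]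
    exact mul_le_of_le_one_right (norm_nonneg _) (pow_le_one₀ hr.1.le hr.2.le)
  exact tsum_subtype_eq_zero_of_tsum_mul_exp_eq_zero
    (hβ.of_nonneg_of_le (fun _ => norm_nonneg _) hbound) L (h r hr) (L i₀)

section InnerTsum

variable {ι 𝕜 E : Type*} [RCLike 𝕜] [NormedAddCommGroup E] [InnerProductSpace 𝕜 E]

theorem inner_tsum (x : E) {f : ι → E} (hf : Summable f) :
    inner 𝕜 x (∑' i, f i) = ∑' i, inner 𝕜 x (f i) := by
  simpa only [innerSL_apply_apply] using (innerSL 𝕜 x).map_tsum hf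

theorem tsum_inner {f : ι → E} (hf : Summable f) (x : E) :
    inner 𝕜 (∑' i, f i) x = ∑' i, inner 𝕜 (f i) x := by
  rw [← inner_conj_symm, inner_tsum x hf, RCLike.conj_tsum]
  simp only [inner_conj_symm]

end InnerTsum

namespace HilbertBasis

variable {ι 𝕜 E : Type*} [RCLike 𝕜] [NormedAddCommGroup E] [InnerProductSpace 𝕜 E]
  (b : HilbertBasis ι 𝕜 E)

theorem ext_inner_left {x y : E} (h : ∀ i, inner 𝕜 (b i) x = inner 𝕜 (b i) y) : x = y :=
  b.repr.injective <| lp.ext <| funext fun i => by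
    simp only [HilbertBasis.repr_apply_apply, h]

theorem continuousLinearMap_ext {F : Type*} [TopologicalSpace F] [AddCommMonoid F] [Module 𝕜 F]
    [T2Space F] {A B : E →L[𝕜] F} (h : ∀ i, A (b i) = B (b i)) : A = B :=
  ContinuousLinearMap.ext_on (Submodule.dense_iff_topologicalClosure_eq_top.2 b.dense_span)
    (Set.forall_mem_range.2 h)

theorem eq_zero_of_inner_apply_eq_zero_s2 {A : E →L[𝕜] E}
    (h : ∀ i j, inner 𝕜 (b i) (A (b j)) = 0) : A = 0 :=
  b.continuousLinearMap_ext fun j => b.ext_inner_left fun i => by simp [h]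

theorem adjoint_apply_of_apply_eq_smul [CompleteSpace E] {T : E →L[𝕜] E} {μ : ι → 𝕜}
    (hT : ∀ i, T (b i) = μ i • b i) (i : ι) : adjoint T (b i) = starRingEnd 𝕜 (μ i) • b i := by
  classical
  refine b.ext_inner_left fun j => ?_
  rw [adjoint_inner_right, hT, inner_smul_left, inner_smul_right,
    orthonormal_iff_ite.1 b.orthonormal]
  split_ifs with hji
  · rw [hji]
  · simp

theorem norm_inner_apply_le (A : E →L[𝕜] E) (i j : ι) : ‖inner 𝕜 (b i) (A (b j))‖ ≤ ‖A‖ := by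
  simpa [b.orthonormal.1] using norm_inner_le_norm (𝕜 := 𝕜) (b i) (A (b j)) |>.trans
    (mul_le_mul_of_nonneg_left (A.le_opNorm (b j)) (norm_nonneg _))

variable {b} in
theorem summable_smul [CompleteSpace E] {x : ι → 𝕜} (hx : Summable (‖x ·‖)) :
    Summable fun i => x i • b i :=
  hx.of_norm_bounded fun i => by rw [norm_smul, b.orthonormal.1 i, mul_one]

theorem inner_tsum_smul_apply_tsum_smul [CompleteSpace E] (A : E →L[𝕜] E) {x y : ι → 𝕜}
    (hx : Summable (‖x ·‖)) (hy : Summable (‖y ·‖)) :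
    inner 𝕜 (∑' i, x i • b i) (A (∑' j, y j • b j)) =
      ∑' p : ι × ι, starRingEnd 𝕜 (x p.1) * y p.2 * inner 𝕜 (b p.1) (A (b p.2)) := by
  have hprod : Summable fun p : ι × ι =>
      starRingEnd 𝕜 (x p.1) * y p.2 * inner 𝕜 (b p.1) (A (b p.2)) := by
    refine ((hx.mul_of_nonneg hy (fun _ => norm_nonneg _) fun _ => norm_nonneg _).mul_right ‖A‖)
      |>.of_norm_bounded fun p => ?_
    rw [norm_mul, norm_mul, RCLike.norm_conj]
    exact mul_le_mul_of_nonneg_left (b.norm_inner_apply_le A _ _) (by positivity)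
  calc inner 𝕜 (∑' i, x i • b i) (A (∑' j, y j • b j))
      = ∑' i, ∑' j, starRingEnd 𝕜 (x i) * y j * inner 𝕜 (b i) (A (b j)) := by
        have hAy : Summable fun j => y j • A (b j) := by
          simpa only [map_smul] using (summable_smul hy).mapL A
        rw [A.map_tsum (summable_smul hy), tsum_inner (summable_smul hx)]
        simp only [inner_smul_left, map_smul, inner_tsum _ hAy, inner_smul_right]
        exact tsum_congr fun i => tsum_congr fun j => by ring
    _ = _ := hprod.tsum_prod.symm

end HilbertBasis

section CoherentState

open Nat

noncomputable def coherentCoeff (z : ℂ) (n : ℕ) : ℂ := z ^ n / (Real.sqrt n ! : ℂ)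

theorem norm_coherentCoeff (z : ℂ) (n : ℕ) : ‖coherentCoeff z n‖ = ‖z‖ ^ n / Real.sqrt n ! := by
  rw [coherentCoeff, norm_div, norm_pow, norm_real, Real.norm_of_nonneg (Real.sqrt_nonneg _)]

theorem summable_norm_coherentCoeff (z : ℂ) : Summable (‖coherentCoeff z ·‖) := by
  -- AM-GM applied to `‖z‖ ^ n / √n! = ((2 * ‖z‖) ^ n / √n!) * (1 / 2) ^ n`
  have hbound : ∀ n, ‖coherentCoeff z n‖ ≤ ((4 * ‖z‖ ^ 2) ^ n / n ! + (1 / 4) ^ n) / 2 := by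
    intro n
    have hfac : (0 : ℝ) < n ! := by exact_mod_cast n.factorial_pos
    rw [norm_coherentCoeff]
    set u := (2 * ‖z‖) ^ n
    set v := (1 / 2 : ℝ) ^ n
    set s := Real.sqrt n !
    have hs : 0 < s := Real.sqrt_pos.2 hfac
    have huv : ‖z‖ ^ n = u * v := by rw [← mul_pow]; ring_nf
    have hu : (4 * ‖z‖ ^ 2) ^ n = u ^ 2 := by rw [← pow_mul, mul_comm n, pow_mul]; ring_nf
    have hv : (1 / 4 : ℝ) ^ n = v ^ 2 := by rw [← pow_mul, mul_comm n, pow_mul]; norm_num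
    rw [huv, hu, hv, ← Real.sq_sqrt hfac.le, div_le_iff₀ hs]
    field_simp
    nlinarith [sq_nonneg (u - v * s)]
  exact .of_nonneg_of_le (fun _ => norm_nonneg _) hbound
    (((Real.summable_pow_div_factorial _).add
      (summable_geometric_of_lt_one (by norm_num) (by norm_num))).div_const 2)

theorem coherentCoeff_mul_exp (z t : ℂ) (n : ℕ) :
    coherentCoeff (z * exp (I * t)) n = exp (I * n * t) * coherentCoeff z n := by
  rw [coherentCoeff, coherentCoeff, mul_pow, ← exp_nat_mul]
  ring_nf

theorem conj_coherentCoeff_mul_coherentCoeff (r t : ℝ) (m n : ℕ) :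
    starRingEnd ℂ (coherentCoeff (r * exp (I * t)) m) * coherentCoeff (r * exp (I * t)) n =
      (r : ℂ) ^ (m + n) / (Real.sqrt m ! * Real.sqrt n ! : ℝ) *
        exp (((n : ℤ) - m : ℤ) * t * I) := by
  rw [coherentCoeff_mul_exp, coherentCoeff_mul_exp, map_mul, ← exp_conj, mul_mul_mul_comm,
    ← exp_add]
  simp only [coherentCoeff, map_div₀, map_pow, map_mul, conj_ofReal, map_natCast, conj_I]
  push_cast
  ring_nf

variable {H : Type*} [NormedAddCommGroup H] [InnerProductSpace ℂ H] [CompleteSpace H]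
  (e : HilbertBasis ℕ ℂ H)

theorem coherentState_eq_smul_tsum (z : ℂ) :
    coherentState e z = (Real.exp (-‖z‖ ^ 2 / 2) : ℂ) • ∑' n, coherentCoeff z n • e n :=
  rfl

theorem map_coherentState {T : H →L[ℂ] H} {θ : ℝ} (hT : ∀ n : ℕ, T (e n) = exp (I * n * θ) • e n)
    (z : ℂ) : T (coherentState e z) = coherentState e (z * exp (I * θ)) := by
  have hnorm : ‖z * exp (I * θ)‖ = ‖z‖ := by
    rw [norm_mul, mul_comm I, norm_exp_ofReal_mul_I, mul_one]
  rw [coherentState_eq_smul_tsum, coherentState_eq_smul_tsum, map_smul, T.map_tsum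
    (HilbertBasis.summable_smul (summable_norm_coherentCoeff z)), hnorm]
  simp only [map_smul, hT, smul_smul, coherentCoeff_mul_exp, mul_comm]

theorem eq_zero_of_inner_coherentState_self_eq_zero {A : H →L[ℂ] H}
    (h : ∀ z, inner ℂ (coherentState e z) (A (coherentState e z)) = 0) : A = 0 := by
  set ψ := fun z => ∑' n, coherentCoeff z n • e n
  have hψ : ∀ z, inner ℂ (ψ z) (A (ψ z)) = 0 := fun z => by
    simpa [coherentState_eq_smul_tsum, inner_smul_left, inner_smul_right, Real.exp_ne_zero]
      using h z
  set β : ℕ × ℕ → ℂ := fun p =>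
    inner ℂ (e p.1) (A (e p.2)) / (Real.sqrt p.1 ! * Real.sqrt p.2 ! : ℝ)
  have hβ : β = 0 := by
    refine eq_zero_of_tsum_mul_pow_mul_exp_eq_zero (d := fun p => p.1 + p.2)
      (L := fun p => (p.2 : ℤ) - p.1) ?_ ?_ fun r _ t => ?_
    · refine (((summable_norm_coherentCoeff 1).mul_of_nonneg (summable_norm_coherentCoeff 1)
        (fun _ => norm_nonneg _) fun _ => norm_nonneg _).mul_left ‖A‖).of_nonneg_of_le
        (fun _ => norm_nonneg _) fun p => ?_
      simp only [β, norm_div, norm_coherentCoeff, norm_one, one_pow, norm_real]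
      rw [Real.norm_of_nonneg (by positivity), one_div_mul_one_div, ← div_eq_mul_one_div]
      gcongr
      exact e.norm_inner_apply_le A _ _
    · intro p q hpq
      simp only [Prod.mk.injEq] at hpq
      ext <;> omega
    · rw [← hψ (r * exp (I * t)), e.inner_tsum_smul_apply_tsum_smul A
        (summable_norm_coherentCoeff _) (summable_norm_coherentCoeff _)]
      refine tsum_congr fun p => ?_
      rw [conj_coherentCoeff_mul_coherentCoeff]
      simp only [β]
      ring
  refine e.eq_zero_of_inner_apply_eq_zero_s2 fun m n => ?_
  have hmn := congrFun hβ (m, n)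
  simp only [β, Pi.zero_apply, div_eq_zero_iff] at hmn
  exact hmn.resolve_right (ofReal_ne_zero.2 (by positivity))

theorem adjoint_apply_coherentState {R : H →L[ℂ] H} {θ : ℝ}
    (hR : ∀ n : ℕ, R (e n) = exp (I * n * θ) • e n) (z : ℂ) :
    adjoint R (coherentState e z) = coherentState e (z * exp (-(I * θ))) := by
  have hadj : ∀ n : ℕ, adjoint R (e n) = exp (I * n * (-θ : ℝ)) • e n := fun n => by
    rw [e.adjoint_apply_of_apply_eq_smul hR, ← exp_conj]
    simp only [map_mul, conj_I, map_natCast, conj_ofReal]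
    push_cast
    ring_nf
  rw [map_coherentState e hadj]
  push_cast
  ring_nf

theorem inner_coherentState_mul_exp_neg_apply {R : H →L[ℂ] H} {θ : ℝ}
    (hR : ∀ n : ℕ, R (e n) = exp (I * n * θ) • e n) (T : H →L[ℂ] H) (z : ℂ) :
    inner ℂ (coherentState e (z * exp (-(I * θ)))) (T (coherentState e (z * exp (-(I * θ))))) =
      inner ℂ (coherentState e z) ((R ∘L T ∘L adjoint R) (coherentState e z)) := by
  rw [← adjoint_apply_coherentState e hR, ContinuousLinearMap.comp_apply,
    ContinuousLinearMap.comp_apply, adjoint_inner_left]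

end CoherentState

theorem shiftSet_add_int_mul_two_pi (X : Set ℝ) (θ : ℝ) (k : ℤ) :
    shiftSet X (θ + k * (2 * π)) = shiftSet X θ := by
  have hfract : ∀ x, (x - (θ + k * (2 * π))) / (2 * π) = (x - θ) / (2 * π) - k := fun x => by
    field_simp
    ring
  ext x
  simp only [shiftSet, hfract, Int.fract_sub_intCast]

theorem exp_neg_I_mul_add_int_mul_two_pi (θ : ℝ) (k : ℤ) :
    exp (-(I * (θ + k * (2 * π) : ℝ))) = exp (-(I * θ)) := by
  have hsplit : -(I * (θ + k * (2 * π) : ℝ)) = -(I * θ) + (-k : ℤ) * (2 * π * I) := by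
    push_cast
    ring
  rw [hsplit, exp_add, exp_int_mul_two_pi_mul_I, mul_one]

theorem stmt2_general {H : Type*} [NormedAddCommGroup H] [InnerProductSpace ℂ H] [CompleteSpace H]
    (e : HilbertBasis ℕ ℂ H)
    (R : ℝ → (H →L[ℂ] H))
    (hR : ∀ θ : ℝ, ∀ n : ℕ, R θ (e n) = Complex.exp (Complex.I * n * θ) • e n)
    (E : Set ℝ → (H →L[ℂ] H)) :
    (∀ X : Set ℝ, MeasurableSet X → X ⊆ Set.Ico 0 (2 * π) → ∀ θ : ℝ,
        (R θ) ∘L (E X) ∘L ContinuousLinearMap.adjoint (R θ) = E (shiftSet X θ)) ↔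
    (∀ z : ℂ, ∀ θ ∈ Set.Ico (0 : ℝ) (2 * π), ∀ X : Set ℝ, MeasurableSet X →
        X ⊆ Set.Ico 0 (2 * π) →
        (inner ℂ (coherentState e (z * Complex.exp (-(Complex.I * θ))))
            (E X (coherentState e (z * Complex.exp (-(Complex.I * θ))))) : ℂ) =
        (inner ℂ (coherentState e z) (E (shiftSet X θ) (coherentState e z)) : ℂ)) := by
  constructor
  · intro hcov z θ _ X hX hXsub
    rw [inner_coherentState_mul_exp_neg_apply e (hR θ), hcov X hX hXsub θ]
  · intro hcs X hX hXsub θ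
    have hcs' : ∀ (z : ℂ) (θ' : ℝ),
        inner ℂ (coherentState e (z * exp (-(I * θ'))))
            (E X (coherentState e (z * exp (-(I * θ'))))) =
          inner ℂ (coherentState e z) (E (shiftSet X θ') (coherentState e z)) := by
      intro z θ'
      obtain ⟨θ₀, hθ₀, k, rfl⟩ : ∃ θ₀ ∈ Set.Ico 0 (2 * π), ∃ k : ℤ, θ' = θ₀ + k * (2 * π) :=
        ⟨toIcoMod Real.two_pi_pos 0 θ', by simpa using toIcoMod_mem_Ico Real.two_pi_pos 0 θ',
          toIcoDiv Real.two_pi_pos 0 θ', by rw [← zsmul_eq_mul, toIcoMod_add_toIcoDiv_zsmul]⟩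
      rw [exp_neg_I_mul_add_int_mul_two_pi, shiftSet_add_int_mul_two_pi]
      exact hcs z θ₀ hθ₀ X hX hXsub
    refine sub_eq_zero.1 (eq_zero_of_inner_coherentState_self_eq_zero e fun z => ?_)
    rw [sub_apply, inner_sub_right, ← inner_coherentState_mul_exp_neg_apply e (hR θ), hcs' z θ,
      sub_self]

/-- A POM `E` on the Borel subsets of `[0,2π)` is phase shift covariant
(`R(θ) E(X) R(θ)* = E(X ⊕ θ)`) if and only if all coherent state probability
measures satisfy the covariance condition
`p_{|z e^{-iθ}⟩}(X) = p_{|z⟩}(X ⊕ θ)`. -/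
theorem stmt2 {H : Type*} [NormedAddCommGroup H] [InnerProductSpace ℂ H] [CompleteSpace H]
    (e : HilbertBasis ℕ ℂ H)
    (R : ℝ → (H →L[ℂ] H))
    (hR : ∀ θ : ℝ, ∀ n : ℕ, R θ (e n) = Complex.exp (Complex.I * n * θ) • e n)
    (hRadj : ∀ θ : ℝ, ContinuousLinearMap.adjoint (R θ) = R (-θ))
    (E : Set ℝ → (H →L[ℂ] H))
    -- POM assumptions: positivity, normalization, weak σ-additivity
    (hpos : ∀ X : Set ℝ, MeasurableSet X → X ⊆ Set.Ico 0 (2 * π) → (E X).IsPositive)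
    (hnorm : E (Set.Ico 0 (2 * π)) = 1)
    (hadd : ∀ f : ℕ → Set ℝ, (∀ n, MeasurableSet (f n)) →
      (∀ n, f n ⊆ Set.Ico 0 (2 * π)) → Pairwise (Function.onFun Disjoint f) →
      ∀ φ ψ : H, HasSum (fun n => (inner ℂ φ (E (f n) ψ) : ℂ)) (inner ℂ φ (E (⋃ n, f n) ψ))) :
    (∀ X : Set ℝ, MeasurableSet X → X ⊆ Set.Ico 0 (2 * π) → ∀ θ : ℝ,
        (R θ) ∘L (E X) ∘L ContinuousLinearMap.adjoint (R θ) = E (shiftSet X θ)) ↔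
    (∀ z : ℂ, ∀ θ ∈ Set.Ico (0 : ℝ) (2 * π), ∀ X : Set ℝ, MeasurableSet X →
        X ⊆ Set.Ico 0 (2 * π) →
        (inner ℂ (coherentState e (z * Complex.exp (-(Complex.I * θ))))
            (E X (coherentState e (z * Complex.exp (-(Complex.I * θ))))) : ℂ) =
        (inner ℂ (coherentState e z) (E (shiftSet X θ) (coherentState e z)) : ℂ)) :=
  stmt2_general e R hR E
end

section
/- For any covariant phase observable E with phase matrix (c_{n,m}) and any number state |n⟩, the variance of the first moment operator E^{(1)} satisfies ⟨n|(E^{(1)})²|n⟩ − ⟨n|E^{(1)}|n⟩² = ∑_{m≠n} |c_{n,m}|²/(n−m)² < π²/3; hence the spectral measure of E^{(1)} is never completely random (variance π²/3) in a number state. -/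
/-!
Parseval's identity for `T (e n)` gives `⟪e n, T² e n⟫ = ∑ₘ |⟪e m, T e n⟫|²`, and the diagonal term
is `⟪e n, T e n⟫²` because `T` is self-adjoint; so the variance is the sum of the squared
off-diagonal entries `|c n m|² / (n - m)²`. Positive semidefiniteness of the phase matrix forces
`|c n m| ≤ 1`, so the variance is at most `∑_{m ≠ n} 1/(n - m)²`. The terms with `m > n` sum to
`π²/6`, while those with `m < n` form a proper partial sum of `∑ 1/k² = π²/6`.
-/
open scoped Real ComplexConjugate

open Finset

def IsPosSemidefKernel {ι : Type*} (c : ι → ι → ℂ) : Prop :=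
  ∀ (F : Finset ι) (t : ι → ℂ),
    0 ≤ (∑ n ∈ F, ∑ m ∈ F, conj (t n) * c n m * t m).re ∧
    (∑ n ∈ F, ∑ m ∈ F, conj (t n) * c n m * t m).im = 0

namespace IsPosSemidefKernel

variable {ι : Type*} {c : ι → ι → ℂ}

theorem quadForm_pair (hc : IsPosSemidefKernel c) {p q : ι} (hpq : p ≠ q) (z : ℂ) :
    0 ≤ (c p p + c p q * z + conj z * c q p + conj z * c q q * z).re ∧
      (c p p + c p q * z + conj z * c q p + conj z * c q q * z).im = 0 := by
  classical
  convert hc {p, q} (fun k => if k = p then 1 else if k = q then z else 0) using 3 <;>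
    simp [sum_pair hpq, hpq.symm] <;> ring

theorem conj_symm (hc : IsPosSemidefKernel c) (hdiag : ∀ i, c i i = 1) (p q : ι) :
    c q p = conj (c p q) := by
  rcases eq_or_ne p q with rfl | hpq
  · simp [hdiag]
  have h1 := (hc.quadForm_pair hpq 1).2
  have h2 := (hc.quadForm_pair hpq Complex.I).2
  simp only [hdiag, Complex.add_im, Complex.mul_im, Complex.one_re, Complex.one_im, map_one,
    Complex.conj_I, Complex.neg_re, Complex.neg_im, Complex.I_re, Complex.I_im,
    Complex.mul_re] at h1 h2
  apply Complex.ext <;> simp only [Complex.conj_re, Complex.conj_im] <;> linarith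

/-- The `2 × 2` principal minor at `z = -conj (c p q)` is `1 - ‖c p q‖²`. -/
theorem norm_le_one (hc : IsPosSemidefKernel c) (hdiag : ∀ i, c i i = 1) (p q : ι) :
    ‖c p q‖ ≤ 1 := by
  rcases eq_or_ne p q with rfl | hpq
  · simp [hdiag]
  have h := (hc.quadForm_pair hpq (-conj (c p q))).1
  rw [hc.conj_symm hdiag p q, hdiag, hdiag] at h
  have : ‖c p q‖ ^ 2 ≤ 1 := by
    rw [Complex.sq_norm, Complex.normSq_apply]
    simp only [map_neg, Complex.conj_conj, Complex.add_re, Complex.one_re, Complex.mul_re,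
      Complex.neg_re, Complex.neg_im, Complex.conj_re, Complex.conj_im, mul_one] at h
    nlinarith
  nlinarith [norm_nonneg (c p q)]

end IsPosSemidefKernel

section HilbertBasis

variable {ι 𝕜 E : Type*} [RCLike 𝕜] [NormedAddCommGroup E] [InnerProductSpace 𝕜 E]

theorem HilbertBasis.hasSum_norm_inner_sq (b : HilbertBasis ι 𝕜 E) (x : E) :
    HasSum (fun i => ‖(inner 𝕜 (b i) x : 𝕜)‖ ^ 2) (‖x‖ ^ 2) := by
  have h := b.hasSum_inner_mul_inner x x
  simp only [← inner_conj_symm x (b _), RCLike.conj_mul, inner_self_eq_norm_sq_to_K] at h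
  exact_mod_cast h

variable [CompleteSpace E] {T : E →L[𝕜] E}

theorem HilbertBasis.hasSum_norm_inner_apply_sq (b : HilbertBasis ι 𝕜 E) (hT : IsSelfAdjoint T)
    (i : ι) :
    HasSum (fun j => ‖(inner 𝕜 (b i) (T (b j)) : 𝕜)‖ ^ 2)
      (RCLike.re (inner 𝕜 (b i) (T (T (b i))) : 𝕜)) := by
  have hsym : ∀ x y, (inner 𝕜 (T x) y : 𝕜) = inner 𝕜 x (T y) := hT.isSymmetric
  rw [← hsym, inner_self_eq_norm_sq]
  convert b.hasSum_norm_inner_sq (T (b i)) using 2 with j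
  rw [← hsym, norm_inner_symm]

theorem HilbertBasis.hasSum_update_norm_inner_apply_sq (b : HilbertBasis ι 𝕜 E)
    (hT : IsSelfAdjoint T) (i : ι) [DecidableEq ι] :
    HasSum (Function.update (fun j => ‖(inner 𝕜 (b i) (T (b j)) : 𝕜)‖ ^ 2) i 0)
      (RCLike.re (inner 𝕜 (b i) (T (T (b i))) : 𝕜) -
        RCLike.re (inner 𝕜 (b i) (T (b i)) : 𝕜) ^ 2) := by
  have hdiag : ‖(inner 𝕜 (b i) (T (b i)) : 𝕜)‖ ^ 2 =
      RCLike.re (inner 𝕜 (b i) (T (b i)) : 𝕜) ^ 2 := by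
    have hre : (RCLike.re (inner 𝕜 (b i) (T (b i)) : 𝕜) : 𝕜) = inner 𝕜 (b i) (T (b i)) :=
      hT.isSymmetric.coe_re_inner_self_apply (b i)
    conv_lhs => rw [← hre, RCLike.norm_ofReal, sq_abs]
  have h := (b.hasSum_norm_inner_apply_sq hT i).update i 0
  rwa [hdiag, zero_sub, neg_add_eq_sub] at h

end HilbertBasis

theorem sum_range_one_div_natCast_sq_lt (N : ℕ) :
    ∑ j ∈ range N, 1 / (j : ℝ) ^ 2 < π ^ 2 / 6 := by
  have hle : ∑ j ∈ range (N + 2), 1 / (j : ℝ) ^ 2 ≤ π ^ 2 / 6 :=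
    sum_le_hasSum _ (fun j _ => by positivity) hasSum_zeta_two
  rw [sum_range_succ, sum_range_succ] at hle
  have : (0 : ℝ) < 1 / ((N + 1 : ℕ) : ℝ) ^ 2 := by positivity
  have : (0 : ℝ) ≤ 1 / (N : ℝ) ^ 2 := by positivity
  linarith

/-- The summand at `m = n` is `1 / 0 = 0`. -/
theorem hasSum_one_div_natCast_sub_sq (n : ℕ) :
    HasSum (fun m : ℕ => 1 / ((n : ℝ) - m) ^ 2)
      (∑ j ∈ range (n + 1), 1 / (j : ℝ) ^ 2 + π ^ 2 / 6) := by
  have hhead : ∑ m ∈ range (n + 1), 1 / ((n : ℝ) - m) ^ 2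
      = ∑ j ∈ range (n + 1), 1 / (j : ℝ) ^ 2 := by
    rw [← sum_range_reflect]
    refine sum_congr rfl fun m hm => ?_
    rw [Nat.add_sub_cancel, Nat.cast_sub (by simpa [Nat.lt_succ_iff] using hm)]
    ring
  have htail : (fun k : ℕ => 1 / ((n : ℝ) - (k + (n + 1) : ℕ)) ^ 2)
      = fun k : ℕ => 1 / ((k : ℝ) + 1) ^ 2 := by
    funext k
    push_cast
    ring
  rw [← hasSum_nat_add_iff' (n + 1), hhead, add_sub_cancel_left, htail]
  simpa using (hasSum_nat_add_iff' 1).mpr hasSum_zeta_two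

theorem tsum_one_div_natCast_sub_sq_lt (n : ℕ) :
    ∑' m : ℕ, 1 / ((n : ℝ) - m) ^ 2 < π ^ 2 / 3 := by
  rw [(hasSum_one_div_natCast_sub_sq n).tsum_eq]
  linarith [sum_range_one_div_natCast_sq_lt (n + 1)]

theorem norm_div_I_mul_natCast_sub_sq (z : ℂ) (n m : ℕ) :
    ‖z / (Complex.I * ((n : ℂ) - m))‖ ^ 2 = ‖z‖ ^ 2 / ((n : ℝ) - m) ^ 2 := by
  rw [norm_div, norm_mul, Complex.norm_I, one_mul, div_pow, ← Complex.ofReal_natCast,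
    ← Complex.ofReal_natCast, ← Complex.ofReal_sub, Complex.norm_real, Real.norm_eq_abs, sq_abs]

theorem stmt7_general {H : Type*} [NormedAddCommGroup H] [InnerProductSpace ℂ H] [CompleteSpace H]
    (e : HilbertBasis ℕ ℂ H) (c : ℕ → ℕ → ℂ)
    -- `(c_{n,m})` is a phase matrix: positive semidefinite with unit diagonal
    (hpsd : ∀ (F : Finset ℕ) (t : ℕ → ℂ),
      0 ≤ (∑ n ∈ F, ∑ m ∈ F, starRingEnd ℂ (t n) * c n m * t m).re ∧
      (∑ n ∈ F, ∑ m ∈ F, starRingEnd ℂ (t n) * c n m * t m).im = 0)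
    (hdiag : ∀ n, c n n = 1)
    -- `T` is the (bounded self-adjoint) first moment operator `E⁽¹⁾`
    (T : H →L[ℂ] H) (hsa : IsSelfAdjoint T)
    (hTod : ∀ n m : ℕ, n ≠ m →
      (inner ℂ (e n) (T (e m)) : ℂ) = c n m / (Complex.I * ((n : ℂ) - m))) :
    ∀ n : ℕ,
      ((inner ℂ (e n) (T (T (e n))) : ℂ).re - ((inner ℂ (e n) (T (e n)) : ℂ).re) ^ 2
          = ∑' m : ℕ, (if m = n then 0 else ‖c n m‖ ^ 2 / ((n : ℝ) - m) ^ 2)) ∧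
      (∑' m : ℕ, (if m = n then 0 else ‖c n m‖ ^ 2 / ((n : ℝ) - m) ^ 2)) < π ^ 2 / 3 := by
  have hc : IsPosSemidefKernel c := hpsd
  intro n
  have hvar : HasSum (fun m : ℕ => if m = n then 0 else ‖c n m‖ ^ 2 / ((n : ℝ) - m) ^ 2)
      ((inner ℂ (e n) (T (T (e n))) : ℂ).re - ((inner ℂ (e n) (T (e n)) : ℂ).re) ^ 2) := by
    have h := e.hasSum_update_norm_inner_apply_sq hsa n
    simp only [RCLike.re_to_complex] at h
    convert h using 2 with m
    rw [Function.update_apply]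
    split_ifs with hm
    · rfl
    · rw [hTod n m (Ne.symm hm), norm_div_I_mul_natCast_sub_sq]
  have hle (m : ℕ) :
      (if m = n then 0 else ‖c n m‖ ^ 2 / ((n : ℝ) - m) ^ 2) ≤ 1 / ((n : ℝ) - m) ^ 2 := by
    split_ifs
    · positivity
    · exact div_le_div_of_nonneg_right (pow_le_one₀ (norm_nonneg _) (hc.norm_le_one hdiag n m))
        (sq_nonneg _)
  refine ⟨hvar.tsum_eq.symm, ?_⟩
  calc _ ≤ ∑' m : ℕ, 1 / ((n : ℝ) - m) ^ 2 :=
        hvar.summable.tsum_le_tsum hle (hasSum_one_div_natCast_sub_sq n).summable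
    _ < π ^ 2 / 3 := tsum_one_div_natCast_sub_sq_lt n

/-- For a covariant phase observable with phase matrix `(c_{n,m})`, the variance of
the first moment operator `E⁽¹⁾` in a number state `|n⟩` equals
`∑_{m≠n} |c_{n,m}|²/(n−m)²`, which is strictly less than `π²/3`; hence the spectral
measure of `E⁽¹⁾` is never completely random in a number state. -/
theorem stmt7 {H : Type*} [NormedAddCommGroup H] [InnerProductSpace ℂ H] [CompleteSpace H]
    (e : HilbertBasis ℕ ℂ H) (c : ℕ → ℕ → ℂ)
    -- `(c_{n,m})` is a phase matrix: positive semidefinite with unit diagonal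
    (hpsd : ∀ (F : Finset ℕ) (t : ℕ → ℂ),
      0 ≤ (∑ n ∈ F, ∑ m ∈ F, starRingEnd ℂ (t n) * c n m * t m).re ∧
      (∑ n ∈ F, ∑ m ∈ F, starRingEnd ℂ (t n) * c n m * t m).im = 0)
    (hdiag : ∀ n, c n n = 1)
    -- `T` is the (bounded self-adjoint) first moment operator `E⁽¹⁾`
    (T : H →L[ℂ] H) (hsa : IsSelfAdjoint T)
    (hTd : ∀ n : ℕ, (inner ℂ (e n) (T (e n)) : ℂ) = (π : ℂ))
    (hTod : ∀ n m : ℕ, n ≠ m →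
      (inner ℂ (e n) (T (e m)) : ℂ) = c n m / (Complex.I * ((n : ℂ) - m))) :
    ∀ n : ℕ,
      ((inner ℂ (e n) (T (T (e n))) : ℂ).re - ((inner ℂ (e n) (T (e n)) : ℂ).re) ^ 2
          = ∑' m : ℕ, (if m = n then 0 else ‖c n m‖ ^ 2 / ((n : ℝ) - m) ^ 2)) ∧
      (∑' m : ℕ, (if m = n then 0 else ‖c n m‖ ^ 2 / ((n : ℝ) - m) ^ 2)) < π ^ 2 / 3 :=
  stmt7_general e c hpsd hdiag T hsa hTod
end

section
/- The matrix elements c_{n,m} of a covariant phase observable E are determined by its first moment operator via c_{n,m} = i(n−m)⟨n|E^{(1)}|m⟩ for all n ≠ m; hence a covariant phase observable is uniquely determined by its first moment operator. -/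
open scoped Real

open Complex

theorem exp_I_mul_intCast_mul_two_pi (k : ℤ) : exp (I * k * (2 * π : ℝ)) = 1 := by
  rw [← exp_int_mul_two_pi_mul_I k]
  push_cast
  ring_nf

/-- Integration by parts; the boundary term survives only at `2π`, and the remaining integral
of `exp (I k θ)` vanishes over a full period. -/
theorem integral_ofReal_mul_exp_I_mul_intCast {k : ℤ} (hk : k ≠ 0) :
    ∫ θ in (0 : ℝ)..(2 * π), (θ : ℂ) * exp (I * k * θ) = 2 * π / (I * k) := by
  have hIk : I * k ≠ 0 := mul_ne_zero I_ne_zero (Int.cast_ne_zero.mpr hk)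
  have hv : ∀ θ : ℝ, HasDerivAt (fun t : ℝ => exp (I * k * t) / (I * k)) (exp (I * k * θ)) θ := by
    intro θ
    have := ((hasDerivAt_id (θ : ℂ)).const_mul (I * k)).cexp.comp_ofReal.div_const (I * k)
    simpa [hIk] using this
  have hu : ∀ θ : ℝ, HasDerivAt (fun t : ℝ => (t : ℂ)) 1 θ := fun θ => ofRealCLM.hasDerivAt
  rw [intervalIntegral.integral_mul_deriv_eq_deriv_mul (fun θ _ => hu θ) (fun θ _ => hv θ)
    intervalIntegrable_const ((by fun_prop : Continuous _).intervalIntegrable _ _)]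
  simp only [one_mul, intervalIntegral.integral_div,
    integral_exp_mul_complex hIk, exp_I_mul_intCast_mul_two_pi]
  simp only [ofReal_zero, mul_zero, zero_mul, exp_zero, sub_self, zero_div, sub_zero]
  push_cast
  ring

theorem I_mul_sub_mul_phaseMomentEntry {n m : ℕ} (h : n ≠ m) (c : ℂ) :
    I * ((n : ℂ) - m) * (c * (1 / (2 * (π : ℂ))) *
      ∫ θ in (0 : ℝ)..(2 * π), (θ : ℂ) * exp (I * ((n : ℂ) - m) * θ)) = c := by
  have hk : (n : ℤ) - m ≠ 0 := sub_ne_zero.mpr (by exact_mod_cast h)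
  have hnm : ((n : ℂ) - m) = (((n : ℤ) - m : ℤ) : ℂ) := by push_cast; rfl
  have hIk : I * (((n : ℤ) - m : ℤ) : ℂ) ≠ 0 := mul_ne_zero I_ne_zero (Int.cast_ne_zero.mpr hk)
  rw [hnm, integral_ofReal_mul_exp_I_mul_intCast hk]
  field_simp

/-- The matrix elements of a covariant phase observable are recovered from its first
moment operator via `c_{n,m} = i(n−m)⟨n|E⁽¹⁾|m⟩` for `n ≠ m`; hence a covariant phase
observable is uniquely determined by its first moment operator. -/
theorem stmt9 {H : Type*} [NormedAddCommGroup H] [InnerProductSpace ℂ H] [CompleteSpace H]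
    (e : HilbertBasis ℕ ℂ H) (c c' : ℕ → ℕ → ℂ)
    (hdiag : ∀ n, c n n = 1) (hdiag' : ∀ n, c' n n = 1)
    (T T' : H →L[ℂ] H)
    -- `T`, `T'` are the first moment operators of the phase observables with
    -- phase matrices `c`, `c'`:  `⟨n|E⁽¹⁾|m⟩ = c_{n,m} (2π)⁻¹ ∫₀^{2π} θ e^{i(n−m)θ} dθ`
    (hT : ∀ n m : ℕ, (inner ℂ (e n) (T (e m)) : ℂ) =
      c n m * (1 / (2 * (π : ℂ))) *
        ∫ θ in (0 : ℝ)..(2 * π), (θ : ℂ) * Complex.exp (Complex.I * ((n : ℂ) - m) * θ))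
    (hT' : ∀ n m : ℕ, (inner ℂ (e n) (T' (e m)) : ℂ) =
      c' n m * (1 / (2 * (π : ℂ))) *
        ∫ θ in (0 : ℝ)..(2 * π), (θ : ℂ) * Complex.exp (Complex.I * ((n : ℂ) - m) * θ)) :
    (∀ n m : ℕ, n ≠ m →
      c n m = Complex.I * ((n : ℂ) - m) * (inner ℂ (e n) (T (e m)) : ℂ)) ∧
    (T' = T → c' = c) := by
  have recover : ∀ n m, n ≠ m → c n m = I * ((n : ℂ) - m) * inner ℂ (e n) (T (e m)) :=
    fun n m h => by rw [hT, I_mul_sub_mul_phaseMomentEntry h]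
  refine ⟨recover, fun hTT => funext₂ fun n m => ?_⟩
  obtain rfl | h := eq_or_ne n m
  · rw [hdiag, hdiag']
  · rw [recover n m h, ← I_mul_sub_mul_phaseMomentEntry h (c' n m), ← hT', hTT]
end

section
/- If |c_{n,m}| = 1 for all n,m ∈ J, c_{n,n} = 1, c_{m,n} = \overline{c_{n,m}}, and every 3×3 principal submatrix [[1, c_{i,j}, c_{i,k}],[\overline{c_{i,j}}, 1, c_{j,k}],[\overline{c_{i,k}}, \overline{c_{j,k}}, 1]] has nonnegative determinant, then c_{n,m} = e^{i(υ_n − υ_m)} for some real phases (υ_n)_{n∈J}. -/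
/-!
For unit entries the determinant of the `3×3` principal submatrix on `i < j < k` equals
`2 Re (c i j * c j k * conj (c i k)) - 2`, so its nonnegativity forces the unit number
`c i j * c j k * conj (c i k)` to be `1`, i.e. `c i k = c i j * c j k`. Anchoring this at the
least element `n₀` of `J` gives `c n m = conj (c n₀ n) * c n₀ m`, and `υ n = -arg (c n₀ n)`.
-/

open ComplexConjugate

theorem Complex.eq_one_of_norm_eq_one_of_one_le_re {z : ℂ} (hz : ‖z‖ = 1) (hre : 1 ≤ z.re) :
    z = 1 := by
  have hre1 : z.re = 1 := le_antisymm (hz ▸ z.re_le_norm) hre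
  have him : z.im = 0 := by
    have := Complex.sq_norm z
    rw [hz, Complex.normSq_apply, hre1] at this
    nlinarith
  exact Complex.ext hre1 him

theorem det_unimodular_hermitian_fin_three {a b d : ℂ} (ha : ‖a‖ = 1) (hb : ‖b‖ = 1)
    (hd : ‖d‖ = 1) :
    !![1, a, d; conj a, 1, b; conj d, conj b, 1].det =
      a * b * conj d + conj (a * b * conj d) - 2 := by
  have hn : ∀ z : ℂ, ‖z‖ = 1 → z * conj z = 1 := fun z hz => by
    rw [Complex.mul_conj', hz]; norm_num
  simp only [Matrix.det_fin_three, Matrix.of_apply, Matrix.cons_val', Matrix.cons_val_zero,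
    Matrix.cons_val_fin_one, Matrix.cons_val_one, Matrix.cons_val, mul_one, one_mul, map_mul,
    Complex.conj_conj]
  linear_combination -hn a ha - hn b hb - hn d hd

theorem eq_mul_of_det_unimodular_hermitian_nonneg {a b d : ℂ} (ha : ‖a‖ = 1) (hb : ‖b‖ = 1)
    (hd : ‖d‖ = 1) (hdet : 0 ≤ !![1, a, d; conj a, 1, b; conj d, conj b, 1].det.re) :
    d = a * b := by
  have hz : a * b * conj d = 1 := by
    refine Complex.eq_one_of_norm_eq_one_of_one_le_re (by simp [ha, hb, hd]) ?_
    rw [det_unimodular_hermitian_fin_three ha hb hd] at hdet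
    simp only [Complex.sub_re, Complex.add_re, Complex.conj_re, Complex.re_ofNat] at hdet
    linarith
  have hd' : conj d * d = 1 := by rw [Complex.conj_mul', hd]; norm_num
  linear_combination -d * hz + a * b * hd'

theorem eq_conj_mul_of_isLeast {α : Type*} [LinearOrder α] {J : Set α} {c : α → α → ℂ}
    {n₀ : α} (hn₀ : IsLeast J n₀)
    (hmod : ∀ n ∈ J, ∀ m ∈ J, ‖c n m‖ = 1)
    (hdiag : ∀ n ∈ J, c n n = 1)
    (hherm : ∀ n ∈ J, ∀ m ∈ J, c m n = conj (c n m))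
    (hmul : ∀ i ∈ J, ∀ j ∈ J, ∀ k ∈ J, i < j → j < k → c i k = c i j * c j k) :
    ∀ n ∈ J, ∀ m ∈ J, c n m = conj (c n₀ n) * c n₀ m := by
  have hunit : ∀ n ∈ J, conj (c n₀ n) * c n₀ n = 1 := fun n hn => by
    rw [Complex.conj_mul', hmod n₀ hn₀.1 n hn]; norm_num
  have hlt : ∀ n ∈ J, ∀ m ∈ J, n < m → c n m = conj (c n₀ n) * c n₀ m := by
    intro n hn m hm hnm
    rcases (hn₀.2 hn).eq_or_lt with rfl | hn₀n
    · rw [hdiag n₀ hn₀.1, map_one, one_mul]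
    · rw [hmul n₀ hn₀.1 n hn m hm hn₀n hnm, ← mul_assoc, hunit n hn, one_mul]
  intro n hn m hm
  rcases lt_trichotomy n m with hnm | rfl | hmn
  · exact hlt n hn m hm hnm
  · rw [hdiag n hn, hunit n hn]
  · rw [hherm m hm n hn, hlt m hm n hn hmn, map_mul, Complex.conj_conj, mul_comm]

theorem conj_mul_eq_exp_of_norm_eq_one {u v : ℂ} (hu : ‖u‖ = 1) (hv : ‖v‖ = 1) :
    conj u * v = Complex.exp (Complex.I * ((-u.arg : ℝ) - (-v.arg : ℝ))) := by
  have hexp : ∀ z : ℂ, ‖z‖ = 1 → Complex.exp (z.arg * Complex.I) = z := fun z hz => by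
    simpa [hz] using Complex.norm_mul_exp_arg_mul_I z
  conv_lhs => rw [← hexp u hu, ← hexp v hv, ← Complex.exp_conj, ← Complex.exp_add]
  congr 1
  simp only [map_mul, Complex.conj_ofReal, Complex.conj_I]
  push_cast
  ring

/-- If all entries of a Hermitian matrix `(c_{n,m})_{n,m∈J}` have modulus one, the
diagonal is one, and every `3×3` principal submatrix has nonnegative determinant, then
`c_{n,m} = e^{i(υ_n − υ_m)}` for some real phases `(υ_n)_{n∈J}`. -/
theorem stmt13 (J : Set ℕ) (hJ : J.Nonempty) (c : ℕ → ℕ → ℂ)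
    (hmod : ∀ n ∈ J, ∀ m ∈ J, ‖c n m‖ = 1)
    (hdiag : ∀ n ∈ J, c n n = 1)
    (hherm : ∀ n ∈ J, ∀ m ∈ J, c m n = starRingEnd ℂ (c n m))
    (hdet : ∀ i ∈ J, ∀ j ∈ J, ∀ k ∈ J, i < j → j < k →
      0 ≤ (Matrix.det
        !![1, c i j, c i k;
           starRingEnd ℂ (c i j), 1, c j k;
           starRingEnd ℂ (c i k), starRingEnd ℂ (c j k), 1]).re) :
    ∃ υ : ℕ → ℝ, ∀ n ∈ J, ∀ m ∈ J,
      c n m = Complex.exp (Complex.I * ((υ n : ℂ) - (υ m : ℂ))) := by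
  obtain ⟨n₀, hn₀⟩ : ∃ n₀, IsLeast J n₀ := ⟨_, isLeast_csInf hJ⟩
  have hmul : ∀ i ∈ J, ∀ j ∈ J, ∀ k ∈ J, i < j → j < k → c i k = c i j * c j k :=
    fun i hi j hj k hk hij hjk => eq_mul_of_det_unimodular_hermitian_nonneg
      (hmod i hi j hj) (hmod j hj k hk) (hmod i hi k hk) (hdet i hi j hj k hk hij hjk)
  refine ⟨fun n => -(c n₀ n).arg, fun n hn m hm => ?_⟩
  rw [eq_conj_mul_of_isLeast hn₀ hmod hdiag hherm hmul n hn m hm]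
  exact conj_mul_eq_exp_of_norm_eq_one (hmod n₀ hn₀.1 n hn) (hmod n₀ hn₀.1 m hm)
end
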